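/- arXiv:0801.0574 — 2 statements merged into one kernel-verified Lean document; each statement's English description precedes it below -/
import Mathlib

section
/- Let ĝ = g ⊕ V be a Z/2-graded complex Lie algebra ([g,g] ⊆ g, [g,V] ⊆ V, [V,V] ⊆ g) with Killing form β. Let σ be a conjugate-linear Lie algebra involution of g and σ̃ a conjugate-linear involution of V with σ̃[Z, x] = [σZ, σ̃x] for Z ∈ g, x ∈ V. If β(σ̃x, σ̃y) = conj(β(x,y)) for all x, y ∈ V and β(σZ₁, σZ₂) = conj(β(Z₁, Z₂)) for Z₁, Z₂ ∈ g, and β is nondegenerate on g, then σ[x,y] = [σ̃x, σ̃y] for all x, y ∈ V; consequently g^σ ⊕ V^σ̃ is a real Lie subalgebra of ĝ. -/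
/-!
Write `D = τ⁅x, y⁆ - ⁅τ x, τ y⁆` for `x, y ∈ V`; it lies in `g`. For `W ∈ g`, invariance of `β`
and the compatibilities of `τ` with `β` and with the bracket `V × g → V` give
`β(⁅τ x, τ y⁆, τ W) = β(τ x, τ⁅y, W⁆) = conj β(x, ⁅y, W⁆) = conj β(⁅x, y⁆, W) = β(τ⁅x, y⁆, τ W)`.
As `τ` maps `g` onto `g`, `D` is `β`-orthogonal to `g`, hence zero. Then `τ` preserves every
bracket, since it does so on each graded piece, so its fixed points are closed under the bracket.
-/

section

variable {R L : Type*} [CommRing R] [LieRing L] [LieAlgebra R L]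

theorem map_lie_comm (τ : L →+ L) {x y : L} (h : τ ⁅y, x⁆ = ⁅τ y, τ x⁆) :
    τ ⁅x, y⁆ = ⁅τ x, τ y⁆ := by
  rw [← lie_skew, map_neg, h, lie_skew]

theorem map_lie_odd_of_invariant_bilinForm {B : LinearMap.BilinForm R L}
    (hB : ∀ x y z, B ⁅x, y⁆ z = B x ⁅y, z⁆) (φ : R → R) {g V : Submodule R L}
    (hgV : ∀ x ∈ g, ∀ y ∈ V, ⁅x, y⁆ ∈ V) (hVV : ∀ x ∈ V, ∀ y ∈ V, ⁅x, y⁆ ∈ g)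
    (hnd : ∀ x ∈ g, (∀ y ∈ g, B x y = 0) → x = 0)
    {τ : L →+ L} (hτg : Set.MapsTo τ g g) (hτg_surj : Set.SurjOn τ g g) (hτV : Set.MapsTo τ V V)
    (hLiegV : ∀ x ∈ g, ∀ y ∈ V, τ ⁅x, y⁆ = ⁅τ x, τ y⁆)
    (hβV : ∀ x ∈ V, ∀ y ∈ V, B (τ x) (τ y) = φ (B x y))
    (hβg : ∀ x ∈ g, ∀ y ∈ g, B (τ x) (τ y) = φ (B x y))
    {x y : L} (hx : x ∈ V) (hy : y ∈ V) :
    τ ⁅x, y⁆ = ⁅τ x, τ y⁆ := by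
  have hxy : ⁅x, y⁆ ∈ g := hVV x hx y hy
  have hD : τ ⁅x, y⁆ - ⁅τ x, τ y⁆ ∈ g := sub_mem (hτg hxy) (hVV _ (hτV hx) _ (hτV hy))
  refine sub_eq_zero.mp (hnd _ hD fun z hz ↦ ?_)
  obtain ⟨w, hw, rfl⟩ := hτg_surj hz
  have hyw : ⁅y, w⁆ ∈ V := by
    rw [← lie_skew]
    exact neg_mem (hgV w hw y hy)
  have hτyw : τ ⁅y, w⁆ = ⁅τ y, τ w⁆ := map_lie_comm τ (hLiegV w hw y hy)
  rw [map_sub, LinearMap.sub_apply, sub_eq_zero]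
  calc B (τ ⁅x, y⁆) (τ w) = φ (B ⁅x, y⁆ w) := hβg _ hxy _ hw
    _ = φ (B x ⁅y, w⁆) := by rw [hB]
    _ = B (τ x) (τ ⁅y, w⁆) := (hβV _ hx _ hyw).symm
    _ = B ⁅τ x, τ y⁆ (τ w) := by rw [hτyw, hB]

theorem map_lie_of_sup_eq_top {g V : Submodule R L} (hsup : g ⊔ V = ⊤) (τ : L →+ L)
    (hLiegg : ∀ x ∈ g, ∀ y ∈ g, τ ⁅x, y⁆ = ⁅τ x, τ y⁆)
    (hLiegV : ∀ x ∈ g, ∀ y ∈ V, τ ⁅x, y⁆ = ⁅τ x, τ y⁆)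
    (hLieVg : ∀ x ∈ V, ∀ y ∈ g, τ ⁅x, y⁆ = ⁅τ x, τ y⁆)
    (hLieVV : ∀ x ∈ V, ∀ y ∈ V, τ ⁅x, y⁆ = ⁅τ x, τ y⁆) (a b : L) :
    τ ⁅a, b⁆ = ⁅τ a, τ b⁆ := by
  obtain ⟨a₀, ha₀, a₁, ha₁, rfl⟩ := Submodule.mem_sup.mp (hsup ▸ Submodule.mem_top : a ∈ g ⊔ V)
  obtain ⟨b₀, hb₀, b₁, hb₁, rfl⟩ := Submodule.mem_sup.mp (hsup ▸ Submodule.mem_top : b ∈ g ⊔ V)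
  simp only [lie_add, add_lie, map_add, hLiegg a₀ ha₀ b₀ hb₀, hLiegV a₀ ha₀ b₁ hb₁,
    hLieVg a₁ ha₁ b₀ hb₀, hLieVV a₁ ha₁ b₁ hb₁]

end

theorem stmt16_general (L : Type*) [LieRing L] [LieAlgebra ℂ L] [Module.Finite ℂ L]
    (g V : Submodule ℂ L)
    (hcompl : IsCompl g V)
    (hgV : ∀ x ∈ g, ∀ y ∈ V, ⁅x, y⁆ ∈ V)
    (hVV : ∀ x ∈ V, ∀ y ∈ V, ⁅x, y⁆ ∈ g)
    (τ : L → L)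
    (hadd : ∀ x y, τ (x + y) = τ x + τ y)
    (hinv : ∀ x, τ (τ x) = x)
    (hτg : ∀ x ∈ g, τ x ∈ g)
    (hτV : ∀ x ∈ V, τ x ∈ V)
    (hLiegg : ∀ x ∈ g, ∀ y ∈ g, τ ⁅x, y⁆ = ⁅τ x, τ y⁆)
    (hLiegV : ∀ x ∈ g, ∀ y ∈ V, τ ⁅x, y⁆ = ⁅τ x, τ y⁆)
    (hβV : ∀ x ∈ V, ∀ y ∈ V,
      killingForm ℂ L (τ x) (τ y) = starRingEnd ℂ (killingForm ℂ L x y))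
    (hβg : ∀ x ∈ g, ∀ y ∈ g,
      killingForm ℂ L (τ x) (τ y) = starRingEnd ℂ (killingForm ℂ L x y))
    (hnd : ∀ x ∈ g, (∀ y ∈ g, killingForm ℂ L x y = 0) → x = 0) :
    (∀ x ∈ V, ∀ y ∈ V, τ ⁅x, y⁆ = ⁅τ x, τ y⁆) ∧
    (∀ a b : L, τ a = a → τ b = b → τ ⁅a, b⁆ = ⁅a, b⁆) := by
  let T : L →+ L := AddMonoidHom.mk' τ hadd
  have hLieVV : ∀ x ∈ V, ∀ y ∈ V, T ⁅x, y⁆ = ⁅T x, T y⁆ := fun x hx y hy ↦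
    map_lie_odd_of_invariant_bilinForm (B := killingForm ℂ L) (τ := T)
      (LieModule.traceForm_apply_lie_apply ℂ L L) (starRingEnd ℂ) hgV hVV hnd
      (fun z hz ↦ hτg z hz) (fun z hz ↦ ⟨τ z, hτg z hz, hinv z⟩) (fun z hz ↦ hτV z hz)
      hLiegV hβV hβg hx hy
  have hLie : ∀ a b : L, T ⁅a, b⁆ = ⁅T a, T b⁆ :=
    map_lie_of_sup_eq_top hcompl.sup_eq_top T hLiegg hLiegV
      (fun x hx y hy ↦ map_lie_comm T (hLiegV y hy x hx)) hLieVV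
  refine ⟨hLieVV, fun a b ha hb ↦ ?_⟩
  rw [show τ ⁅a, b⁆ = ⁅τ a, τ b⁆ from hLie a b, ha, hb]

/-- For a Z/2-graded complex Lie algebra ĝ = g ⊕ V with Killing form β
nondegenerate on g, and a conjugation τ (σ on g, σ̃ on V) compatible with β and with the
brackets g×g and g×V, one has σ[x,y] = [σ̃x, σ̃y] for x, y ∈ V; consequently the fixed
point set g^σ ⊕ V^σ̃ is a real Lie subalgebra. -/
theorem stmt16 (L : Type*) [LieRing L] [LieAlgebra ℂ L] [Module.Finite ℂ L]
    (g V : Submodule ℂ L)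
    (hcompl : IsCompl g V)
    (hgg : ∀ x ∈ g, ∀ y ∈ g, ⁅x, y⁆ ∈ g)
    (hgV : ∀ x ∈ g, ∀ y ∈ V, ⁅x, y⁆ ∈ V)
    (hVV : ∀ x ∈ V, ∀ y ∈ V, ⁅x, y⁆ ∈ g)
    (τ : L → L)
    (hadd : ∀ x y, τ (x + y) = τ x + τ y)
    (hsmul : ∀ (c : ℂ) (x : L), τ (c • x) = starRingEnd ℂ c • τ x)
    (hinv : ∀ x, τ (τ x) = x)
    (hτg : ∀ x ∈ g, τ x ∈ g)
    (hτV : ∀ x ∈ V, τ x ∈ V)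
    (hLiegg : ∀ x ∈ g, ∀ y ∈ g, τ ⁅x, y⁆ = ⁅τ x, τ y⁆)
    (hLiegV : ∀ x ∈ g, ∀ y ∈ V, τ ⁅x, y⁆ = ⁅τ x, τ y⁆)
    (hβV : ∀ x ∈ V, ∀ y ∈ V,
      killingForm ℂ L (τ x) (τ y) = starRingEnd ℂ (killingForm ℂ L x y))
    (hβg : ∀ x ∈ g, ∀ y ∈ g,
      killingForm ℂ L (τ x) (τ y) = starRingEnd ℂ (killingForm ℂ L x y))
    (hnd : ∀ x ∈ g, (∀ y ∈ g, killingForm ℂ L x y = 0) → x = 0) :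
    (∀ x ∈ V, ∀ y ∈ V, τ ⁅x, y⁆ = ⁅τ x, τ y⁆) ∧
    (∀ a b : L, τ a = a → τ b = b → τ ⁅a, b⁆ = ⁅a, b⁆) :=
  stmt16_general L g V hcompl hgV hVV τ hadd hinv hτg hτV hLiegg hLiegV hβV hβg hnd
end

section
/- Let K be a compact group acting linearly and orthogonally on a finite-dimensional real inner product space (W, ⟨·,·⟩) with ⟨·,·⟩ positive-definite. Let Σ ⊆ W be a subspace such that for some v ∈ Σ, the tangent space k·v of the orbit satisfies k·v ⊕ Σ = W and ⟨k·w, Σ⟩ with w ∈ Σ is always orthogonal to Σ (i.e. ⟨X·w, u⟩ = 0 for all X ∈ k, w, u ∈ Σ). Then Σ meets every K-orbit: for every x ∈ W there exists k ∈ K with k·x ∈ Σ. -/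
/-!
Fix `v ∈ Σ` and pick `k₀ ∈ K` minimising `‖k·x - v‖`, which is possible as `K` is compact.
Moving `y = k₀·x` along the one-parameter subgroups `exp (t A)` cannot decrease the distance
to `v`, so `⟪A y, y - v⟫ = 0`; skew-symmetry turns this into `⟪A v, y⟫ = 0`. Thus `y` is
orthogonal to the tangent space `𝔨·v`, and the orthogonality hypothesis on `Σ` shows that
`Σ` is exactly the orthogonal complement of `𝔨·v`.
-/

open NormedSpace RealInnerProductSpace

namespace Submodule

variable {𝕜 E : Type*} [RCLike 𝕜] [NormedAddCommGroup E] [InnerProductSpace 𝕜 E]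

theorem mem_orthogonal_span_iff {s : Set E} {y : E} :
    y ∈ (span 𝕜 s)ᗮ ↔ ∀ u ∈ s, inner 𝕜 u y = 0 := by
  rw [← span_singleton_le_iff_mem, ← isOrtho_iff_le, isOrtho_comm, isOrtho_span]
  simp

theorem eq_orthogonal_of_isCompl_of_isOrtho {T S : Submodule 𝕜 E} (hcompl : IsCompl T S)
    (hTS : T ⟂ S) : S = Tᗮ :=
  (le_iff_eq_of_codisjoint_of_disjoint hcompl.codisjoint.symm T.orthogonal_disjoint).1
    (isOrtho_iff_le.1 hTS.symm)

end Submodule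

section

variable {E : Type*} [NormedAddCommGroup E] [InnerProductSpace ℝ E]

theorem inner_sub_eq_zero_of_isLocalMin_norm_sub {γ : ℝ → E} {d v : E} (hγ : HasDerivAt γ d 0)
    (hmin : IsLocalMin (fun t => ‖γ t - v‖) 0) : ⟪γ 0 - v, d⟫ = 0 := by
  have hsq : IsLocalMin (fun t => ‖γ t - v‖ ^ 2) 0 := by
    filter_upwards [hmin] with t ht
    exact pow_le_pow_left₀ (norm_nonneg _) ht 2
  simpa using hsq.hasDerivAt_eq_zero (hγ.sub_const v).norm_sq

theorem inner_apply_self_eq_zero_of_skew {A : E →L[ℝ] E} (hA : ∀ x y, ⟪A x, y⟫ = -⟪x, A y⟫)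
    (x : E) : ⟪A x, x⟫ = 0 := by
  linarith [hA x x, real_inner_comm x (A x)]

theorem hasDerivAt_exp_smul_apply_zero [CompleteSpace E] (A : E →L[ℝ] E) (y : E) :
    HasDerivAt (fun t : ℝ => exp (t • A) y) (A y) 0 := by
  simpa [Function.comp_def] using (ContinuousLinearMap.apply ℝ E y).hasFDerivAt.comp_hasDerivAt 0
    (hasDerivAt_exp_smul_const A (0 : ℝ))

theorem inner_apply_eq_zero_of_forall_norm_sub_le_exp [CompleteSpace E] {A : E →L[ℝ] E}
    (hA : ∀ x y, ⟪A x, y⟫ = -⟪x, A y⟫) {y v : E}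
    (hmin : ∀ t : ℝ, ‖y - v‖ ≤ ‖exp (t • A) y - v‖) : ⟪A v, y⟫ = 0 := by
  have hcrit : ⟪y - v, A y⟫ = 0 := by
    simpa using inner_sub_eq_zero_of_isLocalMin_norm_sub (hasDerivAt_exp_smul_apply_zero A y)
      (Filter.Eventually.of_forall fun t => by simpa using hmin t)
  have hyy := inner_apply_self_eq_zero_of_skew hA y
  rw [inner_sub_left, real_inner_comm, hyy] at hcrit
  linarith [hA v y]

end

theorem stmt19_general (K W : Type*) [Group K] [TopologicalSpace K] [CompactSpace K]
    [NormedAddCommGroup W] [InnerProductSpace ℝ W] [FiniteDimensional ℝ W]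
    (ρ : K →* (W ≃ₗᵢ[ℝ] W))
    (hcont : Continuous fun p : K × W => ρ p.1 p.2)
    (𝔨 : Set (W →L[ℝ] W))
    (hskew : ∀ A ∈ 𝔨, ∀ x y : W, (inner ℝ (A x) y : ℝ) = -(inner ℝ x (A y) : ℝ))
    -- 𝔨 is the Lie algebra of K: the flows exp(tA) are realized by elements of K
    (hexp : ∀ A ∈ 𝔨, ∀ t : ℝ, ∃ k : K, ∀ w : W, ρ k w = NormedSpace.exp (t • A) w)
    (Sec : Submodule ℝ W) (v : W) (hv : v ∈ Sec)
    -- k·v ⊕ Σ = W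
    (hcompl : IsCompl (Submodule.span ℝ {w : W | ∃ A ∈ 𝔨, A v = w}) Sec)
    -- ⟨X·w, u⟩ = 0 for all X ∈ k, w, u ∈ Σ
    (horth : ∀ A ∈ 𝔨, ∀ w ∈ Sec, ∀ u ∈ Sec, (inner ℝ (A w) u : ℝ) = 0) :
    ∀ x : W, ∃ k : K, ρ k x ∈ Sec := by
  intro x
  have hortho : Submodule.span ℝ {w : W | ∃ A ∈ 𝔨, A v = w} ⟂ Sec := by
    rw [Submodule.isOrtho_iff_le, Submodule.span_le]
    rintro _ ⟨A, hA, rfl⟩ u hu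
    linarith [hskew A hA u v, horth A hA u hu v hv]
  obtain ⟨k₀, hk₀⟩ : ∃ k₀ : K, ∀ k, ‖ρ k₀ x - v‖ ≤ ‖ρ k x - v‖ :=
    (((hcont.comp (continuous_id.prodMk continuous_const)).sub continuous_const).norm
      ).exists_forall_le' 1 (by simp)
  refine ⟨k₀, ?_⟩
  rw [Submodule.eq_orthogonal_of_isCompl_of_isOrtho hcompl hortho,
    Submodule.mem_orthogonal_span_iff]
  rintro _ ⟨A, hA, rfl⟩
  refine inner_apply_eq_zero_of_forall_norm_sub_le_exp (hskew A hA) fun t => ?_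
  obtain ⟨k, hk⟩ := hexp A hA t
  simpa [← hk] using hk₀ (k * k₀)

/-- A section Σ for a compact group action (orthogonally complementary to
the orbit tangent space at a point, with the orbit directions of Σ orthogonal to Σ)
meets every orbit. -/
theorem stmt19 (K W : Type*) [Group K] [TopologicalSpace K] [CompactSpace K]
    [IsTopologicalGroup K]
    [NormedAddCommGroup W] [InnerProductSpace ℝ W] [FiniteDimensional ℝ W]
    (ρ : K →* (W ≃ₗᵢ[ℝ] W))
    (hcont : Continuous fun p : K × W => ρ p.1 p.2)
    (𝔨 : Set (W →L[ℝ] W))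
    (hskew : ∀ A ∈ 𝔨, ∀ x y : W, (inner ℝ (A x) y : ℝ) = -(inner ℝ x (A y) : ℝ))
    -- 𝔨 is the Lie algebra of K: the flows exp(tA) are realized by elements of K
    (hexp : ∀ A ∈ 𝔨, ∀ t : ℝ, ∃ k : K, ∀ w : W, ρ k w = NormedSpace.exp (t • A) w)
    (Sec : Submodule ℝ W) (v : W) (hv : v ∈ Sec)
    -- k·v ⊕ Σ = W
    (hcompl : IsCompl (Submodule.span ℝ {w : W | ∃ A ∈ 𝔨, A v = w}) Sec)
    -- ⟨X·w, u⟩ = 0 for all X ∈ k, w, u ∈ Σ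
    (horth : ∀ A ∈ 𝔨, ∀ w ∈ Sec, ∀ u ∈ Sec, (inner ℝ (A w) u : ℝ) = 0) :
    ∀ x : W, ∃ k : K, ρ k x ∈ Sec :=
  stmt19_general K W ρ hcont 𝔨 hskew hexp Sec v hv hcompl horth
end
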